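/- arXiv:2003.12946 — 7 statements merged into one kernel-verified Lean document; each statement's English description precedes it below -/
import Mathlib

section
/- A topological space X is T_D if and only if for every subset Y ⊆ X, the derived set of Y is closed (equivalently, the derived set of the derived set of Y is contained in the derived set of Y). -/
/-- A space is T_D (derived sets of singletons are closed) iff every derived set is closed. -/
theorem td_iff_derivedSet_closed {X : Type*} [TopologicalSpace X] :
    (∀ x : X, IsClosed (derivedSet ({x} : Set X))) ↔
      (∀ Y : Set X, IsClosed (derivedSet Y)) := by
  constructor
  · intro h Y
    rw [← isOpen_compl_iff, isOpen_iff_mem_nhds]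
    intro x hx
    rw [Set.mem_compl_iff, mem_derivedSet, accPt_iff_nhds] at hx
    push_neg at hx
    obtain ⟨U, hU, hU2⟩ := hx
    obtain ⟨V, hVU, hVopen, hxV⟩ := mem_nhds_iff.mp hU
    have hnotself : x ∉ derivedSet ({x} : Set X) := by
      intro hxd
      rw [mem_derivedSet, accPt_iff_nhds] at hxd
      obtain ⟨z, hz, hne⟩ := hxd Set.univ Filter.univ_mem
      exact hne hz.2
    have hWopen : IsOpen (V \ derivedSet ({x} : Set X)) := hVopen.sdiff (h x)
    have hxW : x ∈ V \ derivedSet ({x} : Set X) := ⟨hxV, hnotself⟩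
    refine Filter.mem_of_superset (hWopen.mem_nhds hxW) ?_
    intro y hyW hyD
    by_cases hyx : y = x
    · subst hyx
      rw [mem_derivedSet, accPt_iff_nhds] at hyD
      obtain ⟨z, hz, hne⟩ := hyD U hU
      exact hne (hU2 z ⟨hz.1, hz.2⟩)
    · rw [mem_derivedSet, accPt_iff_nhds] at hyD
      apply hyW.2
      rw [mem_derivedSet, accPt_iff_nhds]
      intro O hO
      have hOW : O ∩ (V \ derivedSet ({x} : Set X)) ∈ nhds y :=
        Filter.inter_mem hO (hWopen.mem_nhds hyW)
      obtain ⟨z, ⟨⟨hzO, hzW⟩, hzY⟩, hzne⟩ := hyD _ hOW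
      have hzx : z = x := hU2 z ⟨hVU hzW.1, hzY⟩
      exact ⟨z, ⟨hzO, by simp [hzx]⟩, hzne⟩
  · intro h x
    exact h {x}
end

section
/- Every hereditarily irresolvable topological space is T_D: if no non-empty subspace of X admits two disjoint dense subsets, then the derived set of every singleton in X is closed. -/
/-! The closure of a point `x` is the disjoint union of `{x}` and `D = derivedSet {x}`, and `{x}`
is dense in it. If `x` lay in the closure of `D`, then `D` would be dense in `closure {x}` too,
making this non-empty subspace resolvable. Hence `x ∉ closure D`, and since
`closure D ⊆ closure {x} = {x} ∪ D`, the set `D` is closed. -/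

section

open Set

variable {X : Type*} [TopologicalSpace X]

def IsResolvable (Y : Set X) : Prop :=
  ∃ A B : Set X, A ⊆ Y ∧ B ⊆ Y ∧ Disjoint A B ∧ Y ⊆ closure A ∧ Y ⊆ closure B

theorem notMem_derivedSet_singleton (x : X) : x ∉ derivedSet ({x} : Set X) := by
  rw [mem_derivedSet, accPt_principal_iff_clusterPt, sdiff_self, clusterPt_principal_iff]
  exact fun h => (h univ Filter.univ_mem).ne_empty (inter_empty _)

theorem derivedSet_singleton (x : X) : derivedSet ({x} : Set X) = closure {x} \ {x} := by
  rw [closure_eq_self_union_derivedSet, union_sdiff_left, sdiff_eq_left.mpr]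
  exact disjoint_singleton_right.mpr (notMem_derivedSet_singleton x)

theorem isResolvable_closure_singleton {x : X} (hx : x ∈ closure (derivedSet ({x} : Set X))) :
    IsResolvable (closure ({x} : Set X)) := by
  refine ⟨{x}, derivedSet {x}, subset_closure, derivedSet_subset_closure _,
    disjoint_singleton_left.mpr (notMem_derivedSet_singleton x), subset_rfl, ?_⟩
  exact closure_minimal (singleton_subset_iff.mpr hx) isClosed_closure

theorem isClosed_derivedSet_singleton_of_notMem_closure {x : X}
    (hx : x ∉ closure (derivedSet ({x} : Set X))) : IsClosed (derivedSet ({x} : Set X)) := by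
  refine closure_subset_iff_isClosed.mp fun y hy => ?_
  have hy_closure : y ∈ closure {x} :=
    closure_minimal (derivedSet_subset_closure _) isClosed_closure hy
  rw [derivedSet_singleton]
  exact ⟨hy_closure, fun hyx => hx (hyx ▸ hy)⟩

end

/-- Every hereditarily irresolvable space is T_D. -/
theorem hereditarily_irresolvable_TD {X : Type*} [TopologicalSpace X]
    (hHI : ∀ Y : Set X, Y.Nonempty →
      ¬ ∃ A B : Set X, A ⊆ Y ∧ B ⊆ Y ∧ Disjoint A B ∧ Y ⊆ closure A ∧ Y ⊆ closure B) :
    ∀ x : X, IsClosed (derivedSet ({x} : Set X)) := fun x =>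
  isClosed_derivedSet_singleton_of_notMem_closure fun hx =>
    hHI _ ⟨x, subset_closure (Set.mem_singleton x)⟩ (isResolvable_closure_singleton hx)
end

section
/- Let U be a non-principal ultrafilter on ℕ with the topology U ∪ {∅} on ℕ. Then the resulting space E is hereditarily irresolvable: no non-empty subspace of E admits two disjoint dense subsets. -/
/-!
If `A` and `B` are disjoint and both dense in a non-empty `Y ⊇ A ∪ B`, neither can be open: an open
`A` inside `closure B` and disjoint from `B` must be empty, and then `Y ⊆ closure A = ∅`. So if every
set is open or closed, `A` and `B` are closed, whence `Y ⊆ A ∩ B = ∅`. In the ultrafilter space every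
set is open or closed, since `U` contains either it or its complement.
-/

open Set

section Irresolvable

variable {X : Type*} [TopologicalSpace X] {Y A B : Set X}

theorem not_isOpen_of_disjoint_of_subset_closure (hY : Y.Nonempty) (hAY : A ⊆ Y)
    (hYA : Y ⊆ closure A) (hYB : Y ⊆ closure B) (hAB : Disjoint A B) : ¬IsOpen A := by
  intro hA
  have hA_empty : A = ∅ :=
    (hAB.closure_right hA).eq_bot_of_le (hAY.trans hYB)
  obtain ⟨y, hy⟩ := hY
  simpa [hA_empty] using hYA hy

theorem not_exists_disjoint_dense_of_forall_isOpen_or_isClosed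
    (h : ∀ s : Set X, IsOpen s ∨ IsClosed s) (hY : Y.Nonempty) :
    ¬∃ A B : Set X, A ⊆ Y ∧ B ⊆ Y ∧ Disjoint A B ∧ Y ⊆ closure A ∧ Y ⊆ closure B := by
  rintro ⟨A, B, hAY, hBY, hAB, hYA, hYB⟩
  have hA : IsClosed A :=
    (h A).resolve_left (not_isOpen_of_disjoint_of_subset_closure hY hAY hYA hYB hAB)
  have hB : IsClosed B :=
    (h B).resolve_left (not_isOpen_of_disjoint_of_subset_closure hY hBY hYB hYA hAB.symm)
  obtain ⟨y, hy⟩ := hY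
  exact hAB.notMem_of_mem_left (hA.closure_eq ▸ hYA hy) (hB.closure_eq ▸ hYB hy)

end Irresolvable

theorem Ultrafilter.isOpen_or_isClosed {α : Type*} [TopologicalSpace α] {U : Ultrafilter α}
    (hU : ∀ s ∈ U, IsOpen s) (s : Set α) : IsOpen s ∨ IsClosed s :=
  (U.mem_or_compl_mem s).imp (hU s) fun hs => isOpen_compl_iff.mp (hU _ hs)

theorem ultrafilter_space_hereditarily_irresolvable_general (U : Ultrafilter ℕ)
    (T : TopologicalSpace ℕ)
    (hT : ∀ s : Set ℕ, T.IsOpen s ↔ s ∈ U ∨ s = ∅) :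
    ∀ Y : Set ℕ, Y.Nonempty →
      ¬ ∃ A B : Set ℕ, A ⊆ Y ∧ B ⊆ Y ∧ Disjoint A B ∧
        Y ⊆ @closure ℕ T A ∧ Y ⊆ @closure ℕ T B := by
  let _ := T
  intro Y hY
  exact not_exists_disjoint_dense_of_forall_isOpen_or_isClosed
    (Ultrafilter.isOpen_or_isClosed fun s hs => (hT s).mpr (Or.inl hs)) hY

/-- The ultrafilter space on `ℕ` is hereditarily irresolvable: no non-empty subspace has two
disjoint subsets each dense in that subspace. -/
theorem ultrafilter_space_hereditarily_irresolvable (U : Ultrafilter ℕ)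
    (hU : ∀ s : Set ℕ, s.Finite → s ∉ U)
    (T : TopologicalSpace ℕ)
    (hT : ∀ s : Set ℕ, T.IsOpen s ↔ s ∈ U ∨ s = ∅) :
    ∀ Y : Set ℕ, Y.Nonempty →
      ¬ ∃ A B : Set ℕ, A ⊆ Y ∧ B ⊆ Y ∧ Disjoint A B ∧
        Y ⊆ @closure ℕ T A ∧ Y ⊆ @closure ℕ T B :=
  ultrafilter_space_hereditarily_irresolvable_general U T hT
end

section
/- In a crowded T_D topological space X, if O is open and O ⊆ cl(S) for some S ⊆ X, then O ⊆ derivedSet(S). -/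
/-- In a crowded T_D space, an open set contained in the closure of `S` is contained in the
derived set of `S`. -/
theorem crowded_TD_open_subset_derivedSet {X : Type*} [TopologicalSpace X]
    (hcr : ∀ x : X, ¬ IsOpen ({x} : Set X))
    (hTD : ∀ x : X, IsClosed (derivedSet ({x} : Set X)))
    (O S : Set X) (hO : IsOpen O) (h : O ⊆ closure S) :
    O ⊆ derivedSet S := by
  intro x hxO
  rw [mem_derivedSet, accPt_iff_nhds]
  intro N hN
  have hxV : x ∈ (derivedSet ({x} : Set X))ᶜ := by
    simp only [Set.mem_compl_iff, mem_derivedSet, accPt_iff_nhds]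
    push_neg
    exact ⟨Set.univ, Filter.univ_mem, fun y hy => hy.2⟩
  obtain ⟨N', hN'sub, hN'open, hxN'⟩ := mem_nhds_iff.mp hN
  set U := N' ∩ O ∩ (derivedSet ({x} : Set X))ᶜ with hU
  have hUopen : IsOpen U := (hN'open.inter hO).inter (hTD x).isOpen_compl
  have hxU : x ∈ U := ⟨⟨hxN', hxO⟩, hxV⟩
  have hUne : U ≠ {x} := fun he => hcr x (he ▸ hUopen)
  have hy : ∃ y ∈ U, y ≠ x := by
    by_contra hc
    push_neg at hc
    exact hUne (Set.eq_singleton_iff_unique_mem.mpr ⟨hxU, fun y hy => hc y hy⟩)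
  obtain ⟨y, hyU, hyx⟩ := hy
  -- y ∉ derivedSet {x}: get nbhd W of y avoiding x
  have hyW : ∃ W ∈ nhds y, x ∉ W := by
    have := hyU.2
    simp only [Set.mem_compl_iff, mem_derivedSet, accPt_iff_nhds] at this
    push_neg at this
    obtain ⟨W, hW, hWall⟩ := this
    refine ⟨W, hW, fun hxW => hyx.symm ?_⟩
    exact hWall x ⟨hxW, rfl⟩
  obtain ⟨W, hW, hxW⟩ := hyW
  obtain ⟨W', hW'sub, hW'open, hyW'⟩ := mem_nhds_iff.mp hW
  -- U ∩ W' is open, nonempty, ⊆ closure S, so meets S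
  have hyUW : y ∈ U ∩ W' := ⟨hyU, hyW'⟩
  have hycl : y ∈ closure S := h hyU.1.2
  obtain ⟨s, hsUW, hsS⟩ : ((U ∩ W') ∩ S).Nonempty := by
    rw [Set.inter_comm]
    exact mem_closure_iff.mp hycl _ (hUopen.inter hW'open) hyUW |>.imp
      fun s hs => ⟨hs.2, hs.1⟩
  refine ⟨s, ⟨hN'sub hsUW.1.1.1, hsS⟩, fun hsx => hxW (hW'sub (hsx ▸ hsUW.2))⟩
end

section
/- In a crowded T_D topological space X, for every subset S ⊆ X the interior of the closure of S equals the interior of the derived set of S. -/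
lemma aux_closure_subset_union_derivedSet {X : Type*} [TopologicalSpace X] (A : Set X) :
    closure A ⊆ A ∪ derivedSet A := by
  intro y hy
  by_cases hyA : y ∈ A
  · exact Or.inl hyA
  · refine Or.inr ?_
    rw [derivedSet, Set.mem_setOf_eq, accPt_iff_nhds]
    intro U hU
    rcases mem_closure_iff_nhds.mp hy U hU with ⟨z, hzU, hzA⟩
    exact ⟨z, ⟨hzU, hzA⟩, fun h => hyA (h ▸ hzA)⟩

/-- In a crowded T_D space, the interior of the closure of any set equals the interior of its
derived set. -/
theorem crowded_TD_interior_closure_eq_interior_derivedSet {X : Type*} [TopologicalSpace X]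
    (hcr : ∀ x : X, ¬ IsOpen ({x} : Set X))
    (hTD : ∀ x : X, IsClosed (derivedSet ({x} : Set X))) :
    ∀ S : Set X, interior (closure S) = interior (derivedSet S) := by
  intro S
  refine le_antisymm ?_ (interior_mono (derivedSet_subset_closure S))
  have key : interior (closure S) ⊆ derivedSet S := by
    intro x hx
    rw [derivedSet, Set.mem_setOf_eq, accPt_iff_nhds]
    intro U hU
    -- x is not an accumulation point of {x}
    have hxnot : x ∉ derivedSet ({x} : Set X) := by
      intro h
      rw [derivedSet, Set.mem_setOf_eq, accPt_iff_nhds] at h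
      obtain ⟨y, hy, hne⟩ := h Set.univ Filter.univ_mem
      exact hne hy.2
    set W := interior (closure S) ∩ interior U ∩ (derivedSet ({x} : Set X))ᶜ with hW
    have hWopen : IsOpen W :=
      ((isOpen_interior.inter isOpen_interior).inter (hTD x).isOpen_compl)
    have hxW : x ∈ W := ⟨⟨hx, mem_interior_iff_mem_nhds.mpr hU⟩, hxnot⟩
    -- W \ {x} is open
    have hWx_open : IsOpen (W \ {x}) := by
      have : W \ {x} = W ∩ (closure ({x} : Set X))ᶜ := by
        ext z
        constructor
        · rintro ⟨hzW, hzx⟩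
          refine ⟨hzW, fun hz => ?_⟩
          rcases aux_closure_subset_union_derivedSet ({x} : Set X) hz with h | h
          · exact hzx h
          · exact hzW.2 h
        · rintro ⟨hzW, hz⟩
          exact ⟨hzW, fun h => hz (subset_closure h)⟩
      rw [this]
      exact hWopen.inter isClosed_closure.isOpen_compl
    -- W \ {x} is nonempty
    have hne : (W \ {x}).Nonempty := by
      by_contra h
      rw [Set.not_nonempty_iff_eq_empty, Set.diff_eq_empty] at h
      have : W = {x} := le_antisymm h (Set.singleton_subset_iff.mpr hxW)
      exact hcr x (this ▸ hWopen)
    obtain ⟨y, hyW, hyx⟩ := hne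
    -- y ∈ closure S, so W \ {x} meets S
    have hyc : y ∈ closure S := interior_subset hyW.1.1
    rcases mem_closure_iff.mp hyc _ hWx_open ⟨hyW, hyx⟩ with ⟨z, ⟨hzW, hzx⟩, hzS⟩
    exact ⟨z, ⟨interior_subset hzW.1.2, hzS⟩, hzx⟩
  calc interior (closure S) = interior (interior (closure S)) := (interior_interior).symm
    _ ⊆ interior (derivedSet S) := interior_mono key
end

section
/- If a topological space X is the union of two openly irresolvable subspaces (in particular, if X has a 2-partition into openly irresolvable cells), then X is not 3-resolvable. -/
/-- A subset `Z` of `X` is irresolvable as a subspace: it has no pair of disjoint subsets each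
dense in `Z`. -/
def IrresolvableOn {X : Type*} [TopologicalSpace X] (Z : Set X) : Prop :=
  ¬ ∃ A B : Set X, A ⊆ Z ∧ B ⊆ Z ∧ Disjoint A B ∧ Z ⊆ closure A ∧ Z ⊆ closure B

/-- A subset `A` of `X` is openly irresolvable: every non-empty open subspace of `A` is
irresolvable. -/
def OpenlyIrresolvableOn {X : Type*} [TopologicalSpace X] (A : Set X) : Prop :=
  ∀ O : Set X, IsOpen O → (A ∩ O).Nonempty → IrresolvableOn (A ∩ O)

/-- If `X` is the union of two openly irresolvable subspaces then `X` is not 3-resolvable. -/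
theorem union_openly_irresolvable_not_three_resolvable {X : Type*} [TopologicalSpace X]
    (A B : Set X) (hA : OpenlyIrresolvableOn A) (hB : OpenlyIrresolvableOn B)
    (hAB : A ∪ B = Set.univ) :
    ¬ ∃ f : Fin 3 → Set X, (∀ i, (f i).Nonempty) ∧
      (Pairwise fun i j => Disjoint (f i) (f j)) ∧ (⋃ i, f i) = Set.univ ∧
      ∀ i, Dense (f i) := by
  rintro ⟨f, hne, hdisj, _, hdense⟩
  -- Key: for an openly irresolvable Z, Z misses the intersection of the interiors of the
  -- closures of Z ∩ f i and Z ∩ f j (i ≠ j).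
  have key : ∀ Z : Set X, OpenlyIrresolvableOn Z → ∀ i j : Fin 3, i ≠ j →
      Z ∩ (interior (closure (Z ∩ f i)) ∩ interior (closure (Z ∩ f j))) = ∅ := by
    intro Z hZ i j hij
    by_contra h
    set O := interior (closure (Z ∩ f i)) ∩ interior (closure (Z ∩ f j)) with hO
    have hOopen : IsOpen O := isOpen_interior.inter isOpen_interior
    have hne' : (Z ∩ O).Nonempty := Set.nonempty_iff_ne_empty.mpr h
    have hdens : ∀ k : Fin 3, O ⊆ closure (Z ∩ f k) → Z ∩ O ⊆ closure (Z ∩ f k ∩ O) := by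
      intro k hk x hx
      have hcl : x ∈ closure (Z ∩ f k) := hk hx.2
      have : x ∈ closure (O ∩ (Z ∩ f k)) := hOopen.inter_closure ⟨hx.2, hcl⟩
      refine closure_mono ?_ this
      rintro y ⟨hyO, hyZ, hyf⟩; exact ⟨⟨hyZ, hyf⟩, hyO⟩
    refine hZ O hOopen hne' ⟨Z ∩ f i ∩ O, Z ∩ f j ∩ O, ?_, ?_, ?_, ?_, ?_⟩
    · rintro x ⟨⟨h1, _⟩, h2⟩; exact ⟨h1, h2⟩
    · rintro x ⟨⟨h1, _⟩, h2⟩; exact ⟨h1, h2⟩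
    · exact (hdisj hij).mono (fun x hx => hx.1.2) (fun x hx => hx.1.2)
    · exact hdens i (fun x hx => interior_subset hx.1)
    · exact hdens j (fun x hx => interior_subset hx.2)
  -- The interiors of the closures of Z ∩ f i themselves are pairwise disjoint.
  have main : ∀ Z Z' : Set X, OpenlyIrresolvableOn Z → OpenlyIrresolvableOn Z' →
      Z ∪ Z' = Set.univ → ∀ i j : Fin 3, i ≠ j →
      interior (closure (Z ∩ f i)) ∩ interior (closure (Z ∩ f j)) = ∅ := by
    intro Z Z' hZ hZ' hU i j hij
    set W := interior (closure (Z ∩ f i)) ∩ interior (closure (Z ∩ f j)) with hW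
    have hWopen : IsOpen W := isOpen_interior.inter isOpen_interior
    have hZW : Z ∩ W = ∅ := key Z hZ i j hij
    have hWZ' : W ⊆ Z' := by
      intro x hx
      have hxu : x ∈ Z ∪ Z' := hU ▸ Set.mem_univ x
      rcases hxu with h | h
      · have : x ∈ Z ∩ W := ⟨h, hx⟩
        simp [hZW] at this
      · exact h
    have hsub : ∀ k : Fin 3, W ⊆ interior (closure (Z' ∩ f k)) := by
      intro k
      have hcl : W ⊆ closure (Z' ∩ f k) := by
        intro x hx
        have hxcl : x ∈ closure (f k) := hdense k x
        have : x ∈ closure (W ∩ f k) := hWopen.inter_closure (t := f k) ⟨hx, hxcl⟩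
        exact closure_mono (show W ∩ f k ⊆ Z' ∩ f k from fun y hy => ⟨hWZ' hy.1, hy.2⟩) this
      exact interior_maximal hcl hWopen
    have hZ'W : Z' ∩ (interior (closure (Z' ∩ f i)) ∩ interior (closure (Z' ∩ f j))) = ∅ :=
      key Z' hZ' i j hij
    ext x
    simp only [Set.mem_empty_iff_false, iff_false]
    intro hx
    have : x ∈ Z' ∩ (interior (closure (Z' ∩ f i)) ∩ interior (closure (Z' ∩ f j))) :=
      ⟨hWZ' hx, hsub i hx, hsub j hx⟩
    simp [hZ'W] at this
  set P : Fin 3 → Set X := fun i => closure (A ∩ f i) with hPdef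
  set Q : Fin 3 → Set X := fun i => closure (B ∩ f i) with hQdef
  have hP : ∀ i j : Fin 3, i ≠ j → interior (P i) ∩ interior (P j) = ∅ :=
    fun i j hij => main A B hA hB hAB i j hij
  have hQ : ∀ i j : Fin 3, i ≠ j → interior (Q i) ∩ interior (Q j) = ∅ :=
    fun i j hij => main B A hB hA (by rw [Set.union_comm]; exact hAB) i j hij
  -- every point is in P i ∪ Q i for each i
  have hcov : ∀ (x : X) (i : Fin 3), x ∈ P i ∨ x ∈ Q i := by
    intro x i
    have hfi : f i ⊆ (A ∩ f i) ∪ (B ∩ f i) := by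
      intro y hy
      have : y ∈ A ∪ B := hAB ▸ Set.mem_univ y
      rcases this with h | h
      · exact Or.inl ⟨h, hy⟩
      · exact Or.inr ⟨h, hy⟩
    have hx : x ∈ closure ((A ∩ f i) ∪ (B ∩ f i)) :=
      closure_mono hfi (hdense i x)
    rw [closure_union] at hx
    exact hx
  -- every point is in at least two of the P i
  have htwo : ∀ x : X, (x ∈ P 0 ∧ x ∈ P 1) ∨ (x ∈ P 0 ∧ x ∈ P 2) ∨ (x ∈ P 1 ∧ x ∈ P 2) := by
    intro x
    have hmiss : ∀ i j : Fin 3, i ≠ j → x ∉ P i → x ∉ P j → False := by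
      intro i j hij hi hj
      have hQi : x ∈ interior (Q i) := by
        refine interior_maximal ?_ (isClosed_closure (s := A ∩ f i)).isOpen_compl hi
        intro y hy
        rcases hcov y i with h | h
        · exact absurd h hy
        · exact h
      have hQj : x ∈ interior (Q j) := by
        refine interior_maximal ?_ (isClosed_closure (s := A ∩ f j)).isOpen_compl hj
        intro y hy
        rcases hcov y j with h | h
        · exact absurd h hy
        · exact h
      have : x ∈ interior (Q i) ∩ interior (Q j) := ⟨hQi, hQj⟩
      simp [hQ i j hij] at this
    by_cases h0 : x ∈ P 0
    · by_cases h1 : x ∈ P 1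
      · exact Or.inl ⟨h0, h1⟩
      · by_cases h2 : x ∈ P 2
        · exact Or.inr (Or.inl ⟨h0, h2⟩)
        · exact absurd (hmiss 1 2 (by decide) h1 h2) not_false
    · by_cases h1 : x ∈ P 1
      · by_cases h2 : x ∈ P 2
        · exact Or.inr (Or.inr ⟨h1, h2⟩)
        · exact absurd (hmiss 0 2 (by decide) h0 h2) not_false
      · exact absurd (hmiss 0 1 (by decide) h0 h1) not_false
  -- now three closed sets with empty interior cover X
  have hint : ∀ i j : Fin 3, i ≠ j → interior (P i ∩ P j) = ∅ := by
    intro i j hij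
    rw [interior_inter]
    exact hP i j hij
  obtain ⟨x0, hx0⟩ := hne 0
  -- derive contradiction
  by_cases hU1 : ((P 0 ∩ P 1)ᶜ : Set X) = ∅
  · have : P 0 ∩ P 1 = Set.univ := by
      rw [← Set.compl_empty, ← hU1, compl_compl]
    have : x0 ∈ interior (P 0 ∩ P 1) := by
      rw [this, interior_univ]; exact Set.mem_univ x0
    simp [hint 0 1 (by decide)] at this
  · obtain ⟨x1, hx1⟩ := Set.nonempty_iff_ne_empty.mpr hU1
    by_cases hU2 : ((P 0 ∩ P 1)ᶜ ∩ (P 0 ∩ P 2)ᶜ : Set X) = ∅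
    · have hsub : ((P 0 ∩ P 1)ᶜ : Set X) ⊆ P 0 ∩ P 2 := by
        intro y hy
        by_contra hy2
        have : y ∈ ((P 0 ∩ P 1)ᶜ ∩ (P 0 ∩ P 2)ᶜ : Set X) := ⟨hy, hy2⟩
        simp [hU2] at this
      have : x1 ∈ interior (P 0 ∩ P 2) :=
        interior_maximal hsub (isOpen_compl_iff.mpr (by
          exact (isClosed_closure.inter isClosed_closure))) hx1
      simp [hint 0 2 (by decide)] at this
    · obtain ⟨x2, hx2⟩ := Set.nonempty_iff_ne_empty.mpr hU2
      have hsub : ((P 0 ∩ P 1)ᶜ ∩ (P 0 ∩ P 2)ᶜ : Set X) ⊆ P 1 ∩ P 2 := by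
        intro y hy
        rcases htwo y with h | h | h
        · exact absurd h hy.1
        · exact absurd h hy.2
        · exact h
      have hopen : IsOpen ((P 0 ∩ P 1)ᶜ ∩ (P 0 ∩ P 2)ᶜ : Set X) :=
        (isOpen_compl_iff.mpr (isClosed_closure.inter isClosed_closure)).inter
          (isOpen_compl_iff.mpr (isClosed_closure.inter isClosed_closure))
      have : x2 ∈ interior (P 1 ∩ P 2) := interior_maximal hsub hopen hx2
      simp [hint 1 2 (by decide)] at this
end

section
/- There is no set Φ of modal formulas such that for every transitive frame F, F validates every member of Φ if and only if F has circumference at most n. Proof idea: the map x ↦ x mod m is a surjective bounded morphism from (ω, <) onto the single m-element non-degenerate cluster, so every formula valid in (ω,<) is valid in each finite universal cluster, yet (ω,<) has circumference 0 while the (n+1)-cluster has circumference n+1. -/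
/-- Modal formulas. -/
inductive ModalFormula where
  | var : ℕ → ModalFormula
  | bot : ModalFormula
  | imp : ModalFormula → ModalFormula → ModalFormula
  | dia : ModalFormula → ModalFormula

/-- Truth of a modal formula at a world of a Kripke model. -/
def ModalFormula.Eval {W : Type} (R : W → W → Prop) (V : ℕ → W → Prop) :
    ModalFormula → W → Prop
  | .var p, w => V p w
  | .bot, _ => False
  | .imp φ ψ, w => φ.Eval R V w → ψ.Eval R V w
  | .dia φ, w => ∃ v, R w v ∧ φ.Eval R V v

/-- Validity of a modal formula in a frame. -/
def ModalFormula.ValidOn {W : Type} (R : W → W → Prop) (φ : ModalFormula) : Prop :=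
  ∀ (V : ℕ → W → Prop) (w : W), φ.Eval R V w

/-- The frame `(W, R)` has circumference at most `n`: no cycle of length greater than `n`. -/
def CircumferenceAtMost {W : Type} (R : W → W → Prop) (n : ℕ) : Prop :=
  ∀ k : ℕ, n < k → ¬ ∃ x : Fin k → W, Function.Injective x ∧ ∀ i : Fin k, R (x i) (x ⟨((i : ℕ) + 1) % k, Nat.mod_lt _ (Nat.lt_of_le_of_lt (Nat.zero_le _) i.isLt)⟩)

/-- The mod map from ℕ onto `Fin (n+1)`. -/
def modMap (n : ℕ) (x : ℕ) : Fin (n + 1) := ⟨x % (n + 1), Nat.mod_lt _ (Nat.succ_pos n)⟩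

lemma pmorph (n : ℕ) (V : ℕ → Fin (n + 1) → Prop) (φ : ModalFormula) :
    ∀ x : ℕ, φ.Eval (· < ·) (fun p m => V p (modMap n m)) x ↔
      φ.Eval (fun _ _ => True) V (modMap n x) := by
  induction φ with
  | var p => intro x; rfl
  | bot => intro x; rfl
  | imp φ ψ ihφ ihψ =>
      intro x
      simp only [ModalFormula.Eval, ihφ x, ihψ x]
  | dia φ ih =>
      intro x
      constructor
      · rintro ⟨v, _, hv⟩
        exact ⟨modMap n v, trivial, (ih v).mp hv⟩
      · rintro ⟨v, -, hv⟩
        refine ⟨(x + 1) * (n + 1) + v.val, ?_, ?_⟩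
        · calc x < x + 1 := Nat.lt_succ_self x
            _ ≤ (x + 1) * (n + 1) := Nat.le_mul_of_pos_right _ (Nat.succ_pos n)
            _ ≤ _ := Nat.le_add_right _ _
        · rw [ih]
          have : modMap n ((x + 1) * (n + 1) + v.val) = v :=
            Fin.ext (by show ((x + 1) * (n + 1) + v.val) % (n + 1) = v.val
                        rw [Nat.mul_comm, Nat.mul_add_mod, Nat.mod_eq_of_lt v.isLt])
          rw [this]
          exact hv

/-- No set of modal formulas defines, over all transitive frames, the property of having
circumference at most `n`. -/
theorem no_modal_definition_of_circumference (n : ℕ) :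
    ¬ ∃ Φ : Set ModalFormula, ∀ (W : Type) (R : W → W → Prop), Transitive R →
      ((∀ φ ∈ Φ, φ.ValidOn R) ↔ CircumferenceAtMost R n) := by
  rintro ⟨Φ, hΦ⟩
  -- (ℕ, <) is transitive and has circumference 0 ≤ n
  have htransN : Transitive ((· < ·) : ℕ → ℕ → Prop) := fun _ _ _ => Nat.lt_trans
  have hcircN : CircumferenceAtMost ((· < ·) : ℕ → ℕ → Prop) n := by
    intro k hk
    rintro ⟨x, -, hcyc⟩
    have hkpos : 0 < k := Nat.lt_of_le_of_lt (Nat.zero_le n) hk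
    -- x 0 ≤ x j for all j < k
    have hle : ∀ j : ℕ, (hj : j < k) → x ⟨0, hkpos⟩ ≤ x ⟨j, hj⟩ := by
      intro j
      induction j with
      | zero => intro _; exact le_rfl
      | succ j ihj =>
          intro hj
          have hj' : j < k := Nat.lt_of_succ_lt hj
          have h1 := hcyc ⟨j, hj'⟩
          have h2 : x ⟨(j + 1) % k, Nat.mod_lt _ hkpos⟩ = x ⟨j + 1, hj⟩ :=
            congrArg x (Fin.ext (Nat.mod_eq_of_lt hj))
          simp only at h1
          rw [h2] at h1
          exact le_of_lt (lt_of_le_of_lt (ihj hj') h1)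
    have hlast := hcyc ⟨k - 1, Nat.sub_lt hkpos Nat.one_pos⟩
    simp only at hlast
    have h2 : x ⟨(k - 1 + 1) % k, Nat.mod_lt _ hkpos⟩ = x ⟨0, hkpos⟩ :=
      congrArg x (Fin.ext (by show (k - 1 + 1) % k = 0
                              rw [Nat.sub_add_cancel hkpos, Nat.mod_self]))
    rw [h2] at hlast
    exact absurd (lt_of_le_of_lt (hle _ _) hlast) (lt_irrefl _)
  -- every φ ∈ Φ is valid on (ℕ, <)
  have hvalN : ∀ φ ∈ Φ, φ.ValidOn ((· < ·) : ℕ → ℕ → Prop) :=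
    (hΦ ℕ (· < ·) htransN).mpr hcircN
  -- the universal frame on Fin (n+1) is transitive
  have htransC : Transitive (fun (_ _ : Fin (n + 1)) => True) := fun _ _ _ _ _ => trivial
  -- validity transfers to the cluster
  have hvalC : ∀ φ ∈ Φ, φ.ValidOn (fun (_ _ : Fin (n + 1)) => True) := by
    intro φ hφ V w
    have hx : modMap n w.val = w := Fin.ext (Nat.mod_eq_of_lt w.isLt)
    have := (pmorph n V φ w.val).mp (hvalN φ hφ _ w.val)
    rwa [hx] at this
  -- but the cluster has a cycle of length n+1 > n
  have hcircC := (hΦ (Fin (n + 1)) (fun _ _ => True) htransC).mp hvalC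
  exact hcircC (n + 1) (Nat.lt_succ_self n)
    ⟨id, Function.injective_id, fun _ => trivial⟩
end
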